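/- Let g be the standard Gaussian CDF and g'(x) = (1/√(2π))e^{-x²/2}. For any real x > y, |(g(x)g'(y) - g'(x)g(y))/(x - y)| ≤ (1 + |x|)·e^{-y²/2}. -/

import Mathlib

open Real

/-- The standard Gaussian CDF. -/
noncomputable def gcdf (x : ℝ) : ℝ :=
  ∫ t in Set.Iio x, (1 / Real.sqrt (2 * Real.pi)) * Real.exp (-t ^ 2 / 2)

/-- The standard Gaussian density. -/
noncomputable def gpdf (x : ℝ) : ℝ := (1 / Real.sqrt (2 * Real.pi)) * Real.exp (-x ^ 2 / 2)

/-- The inverse Mills-type ratio `ḡ = g'/g`. -/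
noncomputable def gbar (x : ℝ) : ℝ := gpdf x / gcdf x

open MeasureTheory Set Filter

lemma sqrt_two_pi_pos : (0:ℝ) < Real.sqrt (2*Real.pi) := Real.sqrt_pos.2 (by positivity)

lemma one_le_sqrt_two_pi : (1:ℝ) ≤ Real.sqrt (2*Real.pi) := by
  rw [show (1:ℝ) = Real.sqrt 1 by simp]
  exact Real.sqrt_le_sqrt (by nlinarith [Real.pi_gt_three])

lemma gpdf_pos (t : ℝ) : 0 < gpdf t := by
  unfold gpdf; positivity

lemma gpdf_le_exp (t : ℝ) : gpdf t ≤ Real.exp (-t^2/2) := by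
  unfold gpdf
  rw [div_mul_eq_mul_div, one_mul, div_le_iff₀ sqrt_two_pi_pos]
  nlinarith [one_le_sqrt_two_pi, Real.exp_pos (-t^2/2)]

lemma gpdf_le_one (t : ℝ) : gpdf t ≤ 1 :=
  (gpdf_le_exp t).trans (by
    rw [show (1:ℝ) = Real.exp 0 by simp]
    exact Real.exp_le_exp.2 (by nlinarith [sq_nonneg t]))

lemma gpdf_eq : gpdf = fun t : ℝ => (1 / Real.sqrt (2 * Real.pi)) * Real.exp (-(1/2) * t ^ 2) := by
  funext t; unfold gpdf; congr 1; ring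

lemma integrable_gpdf : Integrable gpdf := by
  rw [gpdf_eq]
  exact (integrable_exp_neg_mul_sq (by norm_num : (0:ℝ) < 1/2)).const_mul _

lemma integrable_deriv_gpdf : Integrable (fun t : ℝ => -t * gpdf t) := by
  rw [gpdf_eq]
  have h := (integrable_mul_exp_neg_mul_sq (by norm_num : (0:ℝ) < 1/2)).const_mul
      (-(1 / Real.sqrt (2 * Real.pi)))
  exact h.congr (Filter.Eventually.of_forall fun t => by ring)

lemma gcdf_eq (x : ℝ) : gcdf x = ∫ t in Set.Iio x, gpdf t := rfl

lemma gcdf_pos (x : ℝ) : 0 < gcdf x := by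
  rw [gcdf_eq]
  rw [setIntegral_pos_iff_support_of_nonneg_ae
    (Filter.Eventually.of_forall fun t => (gpdf_pos t).le) integrable_gpdf.integrableOn]
  have : (Function.support fun t : ℝ => gpdf t) = Set.univ := by
    ext t; simp only [Function.mem_support, Set.mem_univ, iff_true]
    exact (gpdf_pos t).ne'
  rw [this, Set.univ_inter]
  simp [Real.volume_Iio]

lemma gcdf_le_one (x : ℝ) : gcdf x ≤ 1 := by
  have h1 : gcdf x ≤ ∫ t : ℝ, gpdf t :=
    setIntegral_le_integral integrable_gpdf (Filter.Eventually.of_forall fun t => (gpdf_pos t).le)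
  have h2 : ∫ t : ℝ, gpdf t = 1 := by
    rw [gpdf_eq, MeasureTheory.integral_const_mul, integral_gaussian]
    rw [show Real.pi / (1/2) = 2 * Real.pi by ring]
    field_simp
  linarith

lemma gcdf_sub (a b : ℝ) : gcdf b - gcdf a = ∫ t in a..b, gpdf t := by
  unfold gcdf
  rw [← integral_Iic_eq_integral_Iio, ← integral_Iic_eq_integral_Iio,
    ← intervalIntegral.integral_Iic_sub_Iic integrable_gpdf.integrableOn
      integrable_gpdf.integrableOn]
  rfl

lemma hasDerivAt_gcdf (p : ℝ) : HasDerivAt gcdf (gpdf p) p := by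
  have hg : gcdf = fun z => gcdf p + ∫ t in p..z, gpdf t := by
    funext z; rw [← gcdf_sub]; ring
  rw [hg]
  have h := intervalIntegral.integral_hasDerivAt_right
    (integrable_gpdf.intervalIntegrable (a := p) (b := p))
    integrable_gpdf.aestronglyMeasurable.stronglyMeasurableAtFilter
    (Continuous.continuousAt (by rw [gpdf_eq]; continuity))
  exact h.const_add _

lemma hasDerivAt_gpdf (p : ℝ) : HasDerivAt gpdf (-p * gpdf p) p := by
  have h1 : HasDerivAt (fun t : ℝ => -t ^ 2 / 2) (-p) p := by
    have h : HasDerivAt (fun t : ℝ => t ^ 2) (2 * p) p := by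
      simpa using hasDerivAt_pow 2 p
    have h2 : HasDerivAt (fun t : ℝ => -t ^ 2 / 2) (-(2 * p) / 2) p := (h.neg).div_const 2
    convert h2 using 1
    ring
  have h2 := HasDerivAt.const_mul (1 / Real.sqrt (2 * Real.pi)) h1.exp
  have he2 : 1 / Real.sqrt (2 * Real.pi) * (Real.exp (-p ^ 2 / 2) * -p) = -p * gpdf p := by
    unfold gpdf; ring
  rw [he2] at h2
  exact h2

lemma tendsto_gpdf_atBot : Tendsto gpdf atBot (nhds 0) := by
  have h1 : Tendsto (fun t : ℝ => t ^ 2) atBot atTop := by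
    have h := (tendsto_pow_atTop (n := 2) (by norm_num : (2:ℕ) ≠ 0)).comp
      (tendsto_neg_atBot_atTop (G := ℝ))
    exact h.congr fun t => by simp [Function.comp]
  have h2 : Tendsto (fun t : ℝ => -t ^ 2) atBot atBot :=
    tendsto_neg_atTop_atBot.comp h1
  have h3 : Tendsto (fun t : ℝ => -t ^ 2 / 2) atBot atBot :=
    h2.atBot_div_const (by norm_num : (0:ℝ) < 2)
  have h4 := (Real.tendsto_exp_atBot.comp h3).const_mul (1 / Real.sqrt (2 * Real.pi))
  rw [mul_zero] at h4
  exact h4.congr fun t => by simp [gpdf, Function.comp]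

lemma integral_deriv_gpdf (c : ℝ) : ∫ t in Set.Iio c, -t * gpdf t = gpdf c := by
  rw [← integral_Iic_eq_integral_Iio]
  have := integral_Iic_of_hasDerivAt_of_tendsto' (a := c) (f := gpdf)
    (f' := fun t => -t * gpdf t) (m := 0)
    (fun t _ => hasDerivAt_gpdf t) integrable_deriv_gpdf.integrableOn tendsto_gpdf_atBot
  rw [this, sub_zero]

lemma mills (c : ℝ) (hc : c ≤ 0) : -c * gcdf c ≤ gpdf c := by
  have h1 : -c * gcdf c = ∫ t in Set.Iio c, -c * gpdf t := by
    rw [MeasureTheory.integral_const_mul, gcdf_eq]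
  rw [h1, ← integral_deriv_gpdf c]
  apply setIntegral_mono_on
  · exact (integrable_gpdf.const_mul _).integrableOn
  · exact integrable_deriv_gpdf.integrableOn
  · exact measurableSet_Iio
  · intro t ht
    have ht' : t < c := ht
    have := (gpdf_pos t).le
    nlinarith

lemma gpdf_anti {a b : ℝ} (ha : 0 ≤ a) (hab : a ≤ b) : gpdf b ≤ gpdf a := by
  unfold gpdf
  have h : Real.exp (-b ^ 2 / 2) ≤ Real.exp (-a ^ 2 / 2) :=
    Real.exp_le_exp.2 (by nlinarith)
  exact mul_le_mul_of_nonneg_left h (by positivity)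

/-- For `x > y`: `|(g(x)g'(y) - g'(x)g(y))/(x - y)| ≤ (1 + |x|)·e^{-y²/2}`. -/
theorem gcdf_gpdf_divided_difference_bound (x y : ℝ) (hxy : y < x) :
    |(gcdf x * gpdf y - gpdf x * gcdf y) / (x - y)| ≤ (1 + |x|) * Real.exp (-y ^ 2 / 2) := by
  set M : ℝ → ℝ := fun t => gcdf t / gpdf t with hM
  have hMd : ∀ t : ℝ, HasDerivAt M (1 + t * (gcdf t / gpdf t)) t := by
    intro t
    have hne : gpdf t ≠ 0 := (gpdf_pos t).ne'
    have h := (hasDerivAt_gcdf t).div (hasDerivAt_gpdf t) hne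
    have he : (gpdf t * gpdf t - gcdf t * (-t * gpdf t)) / gpdf t ^ 2
        = 1 + t * (gcdf t / gpdf t) := by field_simp; ring
    rwa [he] at h
  obtain ⟨c, hc, hceq⟩ := exists_hasDerivAt_eq_slope M (fun t => 1 + t * (gcdf t / gpdf t)) hxy
    (fun t _ => (hMd t).continuousAt.continuousWithinAt) (fun t _ => hMd t)
  have hpx := gpdf_pos x
  have hpy := gpdf_pos y
  have hpc := gpdf_pos c
  have key : (gcdf x * gpdf y - gpdf x * gcdf y) / (x - y)
      = gpdf x * gpdf y * (1 + c * (gcdf c / gpdf c)) := by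
    have hne : x - y ≠ 0 := sub_ne_zero.2 (ne_of_gt hxy)
    rw [hceq, hM]
    field_simp
  rw [key, abs_mul, abs_of_pos (by positivity : (0:ℝ) < gpdf x * gpdf y)]
  have hgc0 : 0 < gcdf c := gcdf_pos c
  have hgc1 : gcdf c ≤ 1 := gcdf_le_one c
  rcases le_or_gt c 0 with h0 | h0
  · -- c ≤ 0 : Mills gives |1 + c M(c)| ≤ 1
    have hm := mills c h0
    have hD1 : 1 + c * (gcdf c / gpdf c) ≤ 1 := by
      have : c * (gcdf c / gpdf c) ≤ 0 := by
        apply mul_nonpos_of_nonpos_of_nonneg h0; positivity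
      linarith
    have hD0 : 0 ≤ 1 + c * (gcdf c / gpdf c) := by
      have h3 : -(c * (gcdf c / gpdf c)) ≤ 1 := by
        rw [show -(c * (gcdf c / gpdf c)) = -c * gcdf c / gpdf c by ring,
          div_le_one hpc]
        exact hm
      linarith
    rw [abs_of_nonneg hD0]
    have h3 : gpdf x * gpdf y * (1 + c * (gcdf c / gpdf c)) ≤ 1 * gpdf y * 1 := by
      apply mul_le_mul _ hD1 hD0 (by positivity)
      exact mul_le_mul_of_nonneg_right (gpdf_le_one x) hpy.le
    calc gpdf x * gpdf y * (1 + c * (gcdf c / gpdf c)) ≤ 1 * gpdf y * 1 := h3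
      _ = gpdf y := by ring
      _ ≤ Real.exp (-y ^ 2 / 2) := gpdf_le_exp y
      _ ≤ (1 + |x|) * Real.exp (-y ^ 2 / 2) := by
          nlinarith [abs_nonneg x, Real.exp_pos (-y^2/2)]
  · -- 0 < c < x
    have hcx : c < x := hc.2
    have hD0 : 0 ≤ 1 + c * (gcdf c / gpdf c) := by positivity
    rw [abs_of_nonneg hD0]
    have hb1 : gpdf x * gpdf y * (1 + c * (gcdf c / gpdf c))
        = gpdf y * (gpdf x + c * gcdf c * (gpdf x / gpdf c)) := by
      field_simp
    have hb2 : gpdf x / gpdf c ≤ 1 := (div_le_one hpc).2 (gpdf_anti h0.le hcx.le)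
    have hb3 : gpdf x + c * gcdf c * (gpdf x / gpdf c) ≤ 1 + |x| := by
      have h4 : c * gcdf c * (gpdf x / gpdf c) ≤ c := by
        have : gcdf c * (gpdf x / gpdf c) ≤ 1 := by
          nlinarith [div_pos hpx hpc]
        nlinarith [div_pos hpx hpc]
      have h5 : c ≤ |x| := le_trans hcx.le (le_abs_self x)
      linarith [gpdf_le_one x]
    rw [hb1]
    calc gpdf y * (gpdf x + c * gcdf c * (gpdf x / gpdf c)) ≤ gpdf y * (1 + |x|) := by
          nlinarith [gpdf_pos y]
      _ ≤ Real.exp (-y ^ 2 / 2) * (1 + |x|) := by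
          nlinarith [gpdf_le_exp y, abs_nonneg x]
      _ = (1 + |x|) * Real.exp (-y ^ 2 / 2) := by ring
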